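/- arXiv:2603.00305 — 2 statements merged into one kernel-verified Lean document; each statement's English description precedes it below -/
import Mathlib

section
/- Let P be a directed set and I an ideal that is χ(P)⁺-complete (closed under unions of χ(P)-many members). Then P is not I-cohesive. Consequently, if P is I-cohesive for some λ-complete ideal I on λ, then λ ≤ χ(P). -/
universe u v w

/-- A subset of a preorder is bounded if some element dominates all its members. -/
def DirBounded {P : Type u} [Preorder P] (A : Set P) : Prop :=
  ∃ p : P, ∀ a ∈ A, a ≤ p

/-- A subset of a preorder is unbounded if it is not bounded. -/
def DirUnbounded {P : Type u} [Preorder P] (A : Set P) : Prop :=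
  ¬ DirBounded A

/-- A subset is cofinal if every element is below some member of it. -/
def DirCofinal {P : Type u} [Preorder P] (B : Set P) : Prop :=
  ∀ p : P, ∃ b ∈ B, p ≤ b

/-- `TukeyLE P Q` : `P ≤_T Q`, witnessed by a cofinal map `f : Q → P`
(a map sending every cofinal subset of `Q` to a cofinal subset of `P`). -/
def TukeyLE (P : Type u) (Q : Type v) [Preorder P] [Preorder Q] : Prop :=
  ∃ f : Q → P, ∀ B : Set Q, DirCofinal B → DirCofinal (f '' B)

/-- `UnbddMap P Q` : there is an unbounded map `g : P → Q`, i.e. one sending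
every unbounded subset of `P` to an unbounded subset of `Q` (witnessing `P ≤_T Q`). -/
def UnbddMap (P : Type u) (Q : Type v) [Preorder P] [Preorder Q] : Prop :=
  ∃ g : P → Q, ∀ A : Set P, DirUnbounded A → DirUnbounded (g '' A)

/-- The character `χ(P)`: least cardinality of a cofinal subset of `P`. -/
noncomputable def chi (P : Type u) [Preorder P] : Cardinal.{u} :=
  sInf {c : Cardinal.{u} | ∃ B : Set P, DirCofinal B ∧ Cardinal.mk B = c}

/-- `λ ∈ Sp_T(P)`: `λ` is regular and there is a `λ`-sequence in `P`
every size-`λ` subfamily of which is unbounded in `P` (equivalently `λ ≤_T P`). -/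
def InSpT (P : Type u) [Preorder P] (l : Cardinal.{u}) : Prop :=
  l.IsRegular ∧ ∃ p : l.ord.ToType → P,
    ∀ S : Set l.ord.ToType, Cardinal.mk S = l → DirUnbounded (p '' S)

/-- `P` is `I`-cohesive: there is a family indexed by the space of `I` such that
the subfamily indexed by any `I`-positive set is unbounded in `P`. -/
def Cohesive (P : Type u) [Preorder P] {S : Type v} (I : Set (Set S)) : Prop :=
  ∃ p : S → P, ∀ T : Set S, T ∉ I → DirUnbounded (p '' T)

lemma exists_dirCofinal_mk_eq_chi (P : Type u) [Preorder P] :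
    ∃ B : Set P, DirCofinal B ∧ Cardinal.mk B = chi P :=
  csInf_mem (s := {c | ∃ B : Set P, DirCofinal B ∧ Cardinal.mk B = c})
    ⟨_, Set.univ, fun p => ⟨p, trivial, le_rfl⟩, rfl⟩

theorem not_cohesive_of_iUnion_mem {P : Type u} [Preorder P] {S : Type v} (I : Set (Set S))
    (hu : (Set.univ : Set S) ∉ I)
    (hcomp : ∀ (ι : Type u) (f : ι → Set S), Cardinal.mk ι ≤ chi P →
      (∀ i, f i ∈ I) → (⋃ i, f i) ∈ I) :
    ¬ Cohesive P I := by
  rintro ⟨p, hp⟩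
  obtain ⟨B, hB, hBcard⟩ := exists_dirCofinal_mk_eq_chi P
  -- Sort the family by an upper bound in a minimal cofinal set: the `χ(P)` fibres are bounded,
  -- hence in `I`, yet they cover `S`.
  choose b hbB hle using fun s => hB (p s)
  have hfiber : ∀ q : B, {s | b s = q} ∈ I := by
    intro q
    by_contra hq
    refine hp _ hq ⟨q, ?_⟩
    rintro _ ⟨s, hs, rfl⟩
    exact hs ▸ hle s
  have hcover : (⋃ q : B, {s | b s = q}) = Set.univ :=
    Set.eq_univ_of_forall fun s => Set.mem_iUnion.2 ⟨⟨b s, hbB s⟩, rfl⟩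
  exact hu (hcover ▸ hcomp B _ hBcard.le hfiber)

theorem stmt13_general {P : Type u} [Preorder P] :
    (∀ (S : Type u) (I : Set (Set S)), (Set.univ : Set S) ∉ I →
      (∀ (ι : Type u) (f : ι → Set S), Cardinal.mk ι ≤ chi P →
        (∀ i, f i ∈ I) → (⋃ i, f i) ∈ I) →
      ¬ Cohesive P I) ∧
    (∀ (l : Cardinal.{u}) (I : Set (Set l.ord.ToType)),
      (Set.univ : Set l.ord.ToType) ∉ I →
      (∀ (ι : Type u) (f : ι → Set l.ord.ToType), Cardinal.mk ι < l →
        (∀ i, f i ∈ I) → (⋃ i, f i) ∈ I) →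
      Cohesive P I → l ≤ chi P) := by
  refine ⟨fun S I => not_cohesive_of_iUnion_mem I, fun l I hu hcomp hcoh => ?_⟩
  by_contra! hlt
  exact not_cohesive_of_iUnion_mem I hu (fun ι f hι => hcomp ι f (hι.trans_lt hlt)) hcoh

/-- If `I` is a proper `χ(P)⁺`-complete ideal (closed under unions of `χ(P)`-many
members) then `P` is not `I`-cohesive; consequently, if `P` is `I`-cohesive for some
proper `λ`-complete ideal `I` on a set of size `λ`, then `λ ≤ χ(P)`. -/
theorem stmt13 {P : Type u} [Preorder P] [IsDirected P (· ≤ ·)] :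
    (∀ (S : Type u) (I : Set (Set S)), (Set.univ : Set S) ∉ I →
      (∀ (ι : Type u) (f : ι → Set S), Cardinal.mk ι ≤ chi P →
        (∀ i, f i ∈ I) → (⋃ i, f i) ∈ I) →
      ¬ Cohesive P I) ∧
    (∀ (l : Cardinal.{u}) (I : Set (Set l.ord.ToType)),
      (Set.univ : Set l.ord.ToType) ∉ I →
      (∀ (ι : Type u) (f : ι → Set l.ord.ToType), Cardinal.mk ι < l →
        (∀ i, f i ∈ I) → (⋃ i, f i) ∈ I) →
      Cohesive P I → l ≤ chi P) :=
  stmt13_general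
end

section
/- Let P be a directed set, B ⊆ Sp_T(P) a set of regular cardinals with |B|⁺-directed P (every subset of P of size ≤ |B| has an upper bound). Then Pcf(B) ⊆ Sp_T(P). -/
universe u v w

/-- `∏ B` for a set `B` of (regular) cardinals: functions `f` with `f b < b`
(as ordinals) for each `b ∈ B`. -/
def prodSet (B : Set Cardinal.{u}) : Type (u + 1) :=
  {f : B → Ordinal.{u} // ∀ b : B, f b < (b : Cardinal.{u}).ord}

/-- `f ≤_U g` for an ultrafilter `U` on `A`. -/
def leU {A : Set Cardinal.{u}} (U : Ultrafilter A) (f g : prodSet A) : Prop :=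
  {b : A | f.1 b ≤ g.1 b} ∈ U

/-- `IsUCof U μ` : `μ` is the cofinality of the (linearly ordered) ultraproduct
`∏ A / U`, i.e. `μ` is least admitting a `≤_U`-cofinal family of length `μ`. -/
def IsUCof {A : Set Cardinal.{u}} (U : Ultrafilter A) (μ : Cardinal.{u}) : Prop :=
  (∃ F : μ.ord.ToType → prodSet A, ∀ g : prodSet A, ∃ i, leU U g (F i)) ∧
    ∀ ν : Cardinal.{u}, ν < μ →
      ¬ ∃ F : ν.ord.ToType → prodSet A, ∀ g : prodSet A, ∃ i, leU U g (F i)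

/-- `Pcf(A) = {cf(∏A/U) : U an ultrafilter on A}`. -/
def Pcf (A : Set Cardinal.{u}) : Set Cardinal.{u} :=
  {μ | ∃ U : Ultrafilter A, IsUCof U μ}

/-- The PCF ideal `J_{<ρ}^A` : sets `X ⊆ A` such that every ultrafilter on `A`
concentrating on `X` gives ultraproduct cofinality `< ρ`. -/
def Jlt (A : Set Cardinal.{u}) (ρ : Cardinal.{u}) : Set (Set Cardinal.{u}) :=
  {X | X ⊆ A ∧ ∀ U : Ultrafilter A, Subtype.val ⁻¹' X ∈ U → ∃ μ < ρ, IsUCof U μ}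


/-!
Each `b ∈ B` carries a `b`-sequence `q_b` in `P` whose subfamilies of size `b` are unbounded.
Bounding `{q_b (f b) : b ∈ B}` by `|B|⁺`-directedness gives `ψ : ∏ B → P`, and `ψ` is an
unbounded map: the traces on each coordinate of a set with bounded `ψ`-image have size `< b`,
hence are bounded below the regular `b`.

If `μ = cf(∏ B / U)`, then `μ` is infinite (the ultraproduct has no maximum), families of size
`< μ` are `≤_U`-bounded, and `G i := a ≤_U-bound of {F j : j ≤ i}` for a cofinal `F` is a
`μ`-sequence whose restriction to any cofinal subset of `μ` is still cofinal; in particular `μ`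
is regular. A `≤_U`-cofinal subset of `∏ B` is pointwise unbounded (add one in every
coordinate), so `ψ ∘ G` witnesses `μ ∈ Sp_T(P)`.
-/

open Cardinal Set Order

section Cofinality

def HasCofinalFamily (X : Type v) [Preorder X] (ν : Cardinal.{u}) : Prop :=
  ∃ F : ν.ord.ToType → X, ∀ x, ∃ i, x ≤ F i

/-- Unlike `Order.cof X`, this cofinality lives in `Cardinal.{u}` even when `X` is large, as in
`IsUCof`. -/
def IsCofinality (X : Type v) [Preorder X] (μ : Cardinal.{u}) : Prop :=
  HasCofinalFamily X μ ∧ ∀ ν < μ, ¬ HasCofinalFamily X ν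

variable {X : Type v} [Preorder X]

theorem hasCofinalFamily_mk {ι : Type u} {F : ι → X} (hF : ∀ x, ∃ i, x ≤ F i) :
    HasCofinalFamily X #ι := by
  obtain ⟨e⟩ : Nonempty ((#ι).ord.ToType ≃ ι) := Cardinal.eq.1 (mk_ord_toType _)
  refine ⟨F ∘ e, fun x => ?_⟩
  obtain ⟨i, hi⟩ := hF x
  exact ⟨e.symm i, by simpa using hi⟩

theorem isCofinal_of_mk_eq {μ : Cardinal.{u}} {S : Set μ.ord.ToType} (hS : #S = μ) :
    IsCofinal S := by
  by_contra h
  obtain ⟨i, hi⟩ := not_isCofinal_iff.1 h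
  have hlt : #(Iio i) < μ := by simpa using mk_Iio_lt i
  exact (hS ▸ mk_le_mk_of_subset hi).not_gt hlt

namespace IsCofinality

variable {μ : Cardinal.{u}}

theorem exists_le_of_mk_lt [@Std.Total X (· ≤ ·)] (hμ : IsCofinality X μ) {ι : Type u}
    (F : ι → X) (hι : #ι < μ) : ∃ x, ∀ i, F i ≤ x := by
  by_contra! h
  exact hμ.2 _ hι (hasCofinalFamily_mk fun x => (h x).imp fun i hi =>
    (total_of (· ≤ ·) (F i) x).resolve_left hi)

theorem aleph0_le [IsDirectedOrder X] [Nonempty X] [NoMaxOrder X] (hμ : IsCofinality X μ) :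
    ℵ₀ ≤ μ := by
  by_contra! h
  obtain ⟨F, hF⟩ := hμ.1
  have : Finite μ.ord.ToType := lt_aleph0_iff_finite.1 (by rwa [mk_ord_toType])
  obtain ⟨M, hM⟩ := Finite.exists_le F
  obtain ⟨y, hy⟩ := exists_gt M
  obtain ⟨i, hi⟩ := hF y
  exact (hi.trans (hM i)).not_gt hy

theorem exists_isCofinal_image [@Std.Total X (· ≤ ·)] (hμ : IsCofinality X μ)
    (hμ0 : ℵ₀ ≤ μ) :
    ∃ G : μ.ord.ToType → X, ∀ S : Set μ.ord.ToType, IsCofinal S → IsCofinal (G '' S) := by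
  obtain ⟨F, hF⟩ := hμ.1
  have hIic (i : μ.ord.ToType) : #(Iic i) < μ := by
    have hIio : #(Iio i) < μ := by simpa using mk_Iio_lt i
    rw [← Iio_insert]
    exact mk_insert_le.trans_lt (add_lt_of_lt hμ0 hIio (one_lt_aleph0.trans_le hμ0))
  choose G hG using fun i => hμ.exists_le_of_mk_lt (fun j : Iic i => F j) (hIic i)
  refine ⟨G, fun S hS x => ?_⟩
  obtain ⟨j, hj⟩ := hF x
  obtain ⟨i, hiS, hji⟩ := hS j
  exact ⟨G i, mem_image_of_mem G hiS, hj.trans (hG i ⟨j, hji⟩)⟩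

theorem isRegular [@Std.Total X (· ≤ ·)] [Nonempty X] [NoMaxOrder X] (hμ : IsCofinality X μ) :
    μ.IsRegular := by
  have hμ0 := hμ.aleph0_le
  obtain ⟨G, hG⟩ := hμ.exists_isCofinal_image hμ0
  refine ⟨hμ0, ?_⟩
  rw [← Ordinal.cof_toType, Order.le_cof_iff]
  intro S hS
  by_contra! hlt
  refine hμ.2 _ hlt (hasCofinalFamily_mk (F := fun s : S => G s) fun x => ?_)
  obtain ⟨_, ⟨s, hs, rfl⟩, hx⟩ := hG S hS x
  exact ⟨⟨s, hs⟩, hx⟩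

end IsCofinality

end Cofinality

theorem Cardinal.IsRegular.exists_forall_lt_of_mk_lt {κ : Cardinal.{u}} (hκ : κ.IsRegular)
    {T : Set κ.ord.ToType} (hT : #T < κ) : ∃ t, ∀ x ∈ T, x < t := by
  rw [← not_isCofinal_iff]
  intro h
  have hcof := Order.cof_le h
  rw [Ordinal.cof_toType, hκ.cof_ord] at hcof
  exact hcof.not_gt hT

theorem mk_lt_of_dirBounded_image {X : Type u} {P : Type v} [Preorder P] {κ : Cardinal.{u}}
    {q : X → P} (hq : ∀ S : Set X, #S = κ → DirUnbounded (q '' S)) {T : Set X}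
    (hT : DirBounded (q '' T)) : #T < κ := by
  by_contra! h
  obtain ⟨S, hST, hS⟩ := le_mk_iff_exists_subset.1 h
  obtain ⟨p, hp⟩ := hT
  exact hq S hS ⟨p, fun _ ha => hp _ (image_mono hST ha)⟩

instance {A : Set Cardinal.{u}} : Preorder (prodSet A) :=
  inferInstanceAs (Preorder {f : A → Ordinal.{u} // ∀ b : A, f b < (b : Cardinal.{u}).ord})

namespace prodSet

variable {A : Set Cardinal.{u}}

noncomputable def coord (f : prodSet A) (b : A) : (b : Cardinal.{u}).ord.ToType :=
  Ordinal.ToType.mk ⟨f.1 b, f.2 b⟩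

theorem exists_forall_lt (hA : ∀ b ∈ A, ℵ₀ ≤ b) (f : prodSet A) :
    ∃ g : prodSet A, ∀ b, f.1 b < g.1 b :=
  ⟨⟨fun b => succ (f.1 b), fun b => (isSuccLimit_ord (hA b b.2)).succ_lt (f.2 b)⟩,
    fun b => lt_succ (f.1 b)⟩

theorem dirBounded_of_forall_mk_lt (hA : ∀ b ∈ A, b.IsRegular) {S : Set (prodSet A)}
    (hS : ∀ b, #((coord · b) '' S) < b) : DirBounded S := by
  choose t ht using fun b : A => (hA b b.2).exists_forall_lt_of_mk_lt (hS b)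
  refine ⟨⟨fun b => (Ordinal.ToType.mk.symm (t b)).1,
    fun b => (Ordinal.ToType.mk.symm (t b)).2⟩, fun f hf b => ?_⟩
  have hlt := Ordinal.ToType.mk.symm.lt_iff_lt.2 (ht b _ ⟨f, hf, rfl⟩)
  simp only [coord, OrderIso.symm_apply_apply] at hlt
  exact hlt.le

end prodSet

theorem unbddMap_prodSet {P : Type u} [Preorder P] {B : Set Cardinal.{u}}
    (hBsp : ∀ b ∈ B, InSpT P b)
    (hdir : ∀ A : Set P, Cardinal.lift.{u + 1} #A ≤ #B → DirBounded A) :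
    UnbddMap (prodSet B) P := by
  choose hreg q hq using hBsp
  choose ψ hψ using fun f : prodSet B =>
    hdir (range fun b : B => q b b.2 (f.coord b))
      (mk_range_le_lift.trans (lift_id'.{u, u + 1} _).le)
  refine ⟨ψ, fun S hS ⟨p, hp⟩ => hS (prodSet.dirBounded_of_forall_mk_lt hreg fun b => ?_)⟩
  refine mk_lt_of_dirBounded_image (hq b b.2) ⟨p, ?_⟩
  rintro _ ⟨_, ⟨f, hf, rfl⟩, rfl⟩
  exact (hψ f _ ⟨b, rfl⟩).trans (hp _ ⟨f, hf, rfl⟩)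

/-- `prodSet A` ordered by `≤_U`, i.e. as germs along `U`; `prodSet A` itself carries the
pointwise order. -/
def Ultraproduct {A : Set Cardinal.{u}} (_U : Ultrafilter A) : Type (u + 1) := prodSet A

namespace Ultraproduct

variable {A : Set Cardinal.{u}} (U : Ultrafilter A)

instance : Preorder (Ultraproduct U) :=
  Preorder.lift fun f : prodSet A => ((f.1 : A → Ordinal.{u}) : (U : Filter A).Germ Ordinal.{u})

instance : @Std.Total (Ultraproduct U) (· ≤ ·) :=
  ⟨fun _ _ => le_total (α := (U : Filter A).Germ Ordinal.{u}) _ _⟩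

theorem not_le_of_forall_lt {f g : prodSet A} (h : ∀ b, f.1 b < g.1 b) :
    ¬ @LE.le (Ultraproduct U) _ g f := fun hle =>
  let ⟨b, hb⟩ := Filter.Eventually.exists (f := (U : Filter A)) hle
  (h b).not_ge hb

theorem noMaxOrder (hA : ∀ b ∈ A, ℵ₀ ≤ b) : NoMaxOrder (Ultraproduct U) where
  exists_gt f := by
    obtain ⟨g, hg⟩ := prodSet.exists_forall_lt hA f
    exact ⟨g, lt_of_le_not_ge
      (Filter.Eventually.of_forall (f := (U : Filter A)) fun b => (hg b).le)
      (not_le_of_forall_lt U hg)⟩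

variable {U}

theorem dirUnbounded_of_isCofinal (hA : ∀ b ∈ A, ℵ₀ ≤ b) {S : Set (prodSet A)}
    (hS : IsCofinal (α := Ultraproduct U) S) : DirUnbounded S := by
  rintro ⟨f, hf⟩
  obtain ⟨g, hg⟩ := prodSet.exists_forall_lt hA f
  obtain ⟨h, hhS, hgh⟩ := hS g
  exact not_le_of_forall_lt U (fun b => (hf h hhS b).trans_lt (hg b)) hgh

end Ultraproduct

theorem isUCof_iff {A : Set Cardinal.{u}} {U : Ultrafilter A} {μ : Cardinal.{u}} :
    IsUCof U μ ↔ IsCofinality (Ultraproduct U) μ := Iff.rfl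

theorem IsUCof.isRegular {A : Set Cardinal.{u}} {U : Ultrafilter A} {μ : Cardinal.{u}}
    (hA : ∀ b ∈ A, ℵ₀ ≤ b) (h : IsUCof U μ) : μ.IsRegular :=
  haveI := Ultraproduct.noMaxOrder U hA
  haveI : Nonempty (Ultraproduct U) :=
    ⟨⟨fun _ => 0, fun b => (isSuccLimit_ord (hA b b.2)).pos⟩⟩
  (isUCof_iff.1 h).isRegular

theorem stmt18_general {P : Type u} [Preorder P]
    (B : Set Cardinal.{u}) (hBreg : ∀ b ∈ B, Cardinal.IsRegular b)
    (hBsp : ∀ b ∈ B, InSpT P b)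
    (hdir : ∀ A : Set P,
      Cardinal.lift.{u + 1} (Cardinal.mk A) ≤ Cardinal.mk B → DirBounded A)
    (μ : Cardinal.{u}) (hμ : μ ∈ Pcf B) :
    InSpT P μ := by
  obtain ⟨U, hU⟩ := hμ
  have hB : ∀ b ∈ B, ℵ₀ ≤ b := fun b hb => (hBreg b hb).aleph0_le
  have hμreg := hU.isRegular hB
  obtain ⟨G, hG⟩ := (isUCof_iff.1 hU).exists_isCofinal_image hμreg.aleph0_le
  obtain ⟨ψ, hψ⟩ := unbddMap_prodSet hBsp hdir
  refine ⟨hμreg, fun i => ψ (G i), fun S hS => ?_⟩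
  rw [← image_image ψ G S]
  exact hψ _ (Ultraproduct.dirUnbounded_of_isCofinal hB (hG S (isCofinal_of_mk_eq hS)))

/-- If `B ⊆ Sp_T(P)` is a set of regular cardinals and `P` is `|B|⁺`-directed
(every subset of `P` of size `≤ |B|` has an upper bound), then
`Pcf(B) ⊆ Sp_T(P)`. -/
theorem stmt18 {P : Type u} [Preorder P] [IsDirected P (· ≤ ·)]
    (B : Set Cardinal.{u}) (hBreg : ∀ b ∈ B, Cardinal.IsRegular b)
    (hBsp : ∀ b ∈ B, InSpT P b)
    (hdir : ∀ A : Set P,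
      Cardinal.lift.{u + 1} (Cardinal.mk A) ≤ Cardinal.mk B → DirBounded A)
    (μ : Cardinal.{u}) (hμ : μ ∈ Pcf B) :
    InSpT P μ :=
  stmt18_general B hBreg hBsp hdir μ hμ
end
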